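/- Let μ₁ ∈ I with μ₁ > μ, set Δ = μ₁ − μ, let ε ∈ (0, Δ) with μ₁ − ε ∈ I, let t₀ ≥ 1 be an integer, and let f(t₀) = 3 log t₀. Define κ = Σ_{s=1}^{t₀} 1{kl(μ̂_s, μ₁ − ε) ≤ f(t₀)/s}. Then E[κ] ≤ inf_{ε' ∈ (0, Δ − ε), μ + ε' ∈ I} ( f(t₀)/kl(μ + ε', μ₁ − ε) + 2V/ε'² ). -/

import Mathlib

/-!
Write `y = μ₁ - ε`, `f = 3 log t₀` and fix an admissible `ε'`, `m = μ + ε'`. Taking expectations,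
`E[κ] = ∑ₛ P(kl(μ̂ₛ, y) ≤ f / s)`. By the three-point identity for the Bregman divergence of `b`,
`kl(·, y)` is decreasing below `y`, also on the closure of `I` where `μ̂ₛ` lives; hence for
`s > f / kl(m, y)` the event forces `μ̂ₛ > m`. A Chernoff bound with parameter `ε' / V`, together
with `b(θ + λ) - b(θ) - λ μ ≤ V λ² / 2`, bounds its probability by `exp(-s ε'² / (2V))`. The at most
`f / kl(m, y)` remaining terms are bounded by `1`, and the geometric series by
`1 / (exp a - 1) ≤ 1 / a = 2V / ε'²` with `a = ε'² / (2V)`.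
-/

open MeasureTheory ProbabilityTheory Real Set

theorem convex_setOf_integrable_exp_mul (ρ : Measure ℝ) :
    Convex ℝ {θ : ℝ | Integrable (fun x => exp (θ * x)) ρ} := by
  intro θ₁ h₁ θ₂ h₂ p q hp hq hpq
  refine ((h₁.const_mul p).add (h₂.const_mul q)).mono' (by fun_prop) (ae_of_all _ fun x => ?_)
  rw [norm_of_nonneg (exp_pos _).le]
  calc exp ((p • θ₁ + q • θ₂) * x) = exp (p • (θ₁ * x) + q • (θ₂ * x)) := by
        simp only [smul_eq_mul]; ring_nf
    _ ≤ p • exp (θ₁ * x) + q • exp (θ₂ * x) :=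
        convexOn_exp.2 (mem_univ _) (mem_univ _) hp hq hpq

section Derivatives

variable {S : Set ℝ} {f f' : ℝ → ℝ}

theorem strictMonoOn_of_hasDerivAt_pos (hS : Convex ℝ S) (hf : ∀ x ∈ S, HasDerivAt f (f' x) x)
    (hf' : ∀ x ∈ S, 0 < f' x) : StrictMonoOn f S :=
  strictMonoOn_of_hasDerivWithinAt_pos hS (fun x hx => (hf x hx).continuousAt.continuousWithinAt)
    (fun x hx => (hf x (interior_subset hx)).hasDerivWithinAt)
    (fun x hx => hf' x (interior_subset hx))

theorem Convex.image_sub_le_mul_sub_of_hasDerivAt_le (hS : Convex ℝ S)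
    (hf : ∀ x ∈ S, HasDerivAt f (f' x) x) {C : ℝ} (hf'C : ∀ x ∈ S, f' x ≤ C) {x y : ℝ}
    (hx : x ∈ S) (hy : y ∈ S) (hxy : x ≤ y) :
    f y - f x ≤ C * (y - x) := by
  have hg : ∀ u ∈ S, HasDerivAt (fun u => C * u - f u) (C - f' u) u := fun u hu => by
    simpa using ((hasDerivAt_id' u).const_mul C).fun_sub (hf u hu)
  have := monotoneOn_of_hasDerivWithinAt_nonneg hS
    (fun u hu => (hg u hu).continuousAt.continuousWithinAt)
    (fun u hu => (hg u (interior_subset hu)).hasDerivWithinAt)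
    (fun u hu => sub_nonneg.2 (hf'C u (interior_subset hu))) hx hy hxy
  simp only at this
  linarith

end Derivatives

def bregman (b b' : ℝ → ℝ) (θ θ' : ℝ) : ℝ := b θ' - b θ - b' θ * (θ' - θ)

section Bregman

variable {S : Set ℝ} {b b' b'' : ℝ → ℝ}

theorem bregman_pos (hS : Convex ℝ S) (hb : ∀ θ ∈ S, HasDerivAt b (b' θ) θ)
    (hmono : StrictMonoOn b' S) {θ θ' : ℝ} (hθ : θ ∈ S) (hθ' : θ' ∈ S) (h : θ < θ') :
    0 < bregman b b' θ θ' := by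
  have hsub : Icc θ θ' ⊆ S := hS.ordConnected.out hθ hθ'
  obtain ⟨ξ, hξ, hslope⟩ := exists_hasDerivAt_eq_slope b b' h
    (fun x hx => (hb x (hsub hx)).continuousAt.continuousWithinAt)
    (fun x hx => hb x (hsub (Ioo_subset_Icc_self hx)))
  have hξθ : b' θ < b' ξ := hmono hθ (hsub (Ioo_subset_Icc_self hξ)) hξ.1
  rw [eq_div_iff (sub_ne_zero.2 h.ne')] at hslope
  unfold bregman
  nlinarith [mul_pos (sub_pos.2 hξθ) (sub_pos.2 h)]

theorem bregman_le_bregman_of_le (hS : Convex ℝ S) (hb : ∀ θ ∈ S, HasDerivAt b (b' θ) θ)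
    (hmono : StrictMonoOn b' S) {a m c : ℝ} (ha : a ∈ S) (hm : m ∈ S) (ham : a ≤ m)
    (hmc : m ≤ c) : bregman b b' m c ≤ bregman b b' a c := by
  have hthree : bregman b b' a c =
      bregman b b' a m + bregman b b' m c + (b' m - b' a) * (c - m) := by
    unfold bregman; ring
  have ham' : 0 ≤ bregman b b' a m := by
    rcases ham.eq_or_lt with rfl | hlt
    · simp [bregman]
    · exact (bregman_pos hS hb hmono ha hm hlt).le
  have := mul_nonneg (sub_nonneg.2 (hmono.monotoneOn ha hm ham)) (sub_nonneg.2 hmc)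
  linarith

theorem bregman_le_mul_sq (hS : Convex ℝ S) (hb : ∀ θ ∈ S, HasDerivAt b (b' θ) θ)
    (hb' : ∀ θ ∈ S, HasDerivAt b' (b'' θ) θ) {V : ℝ} (hV : ∀ θ ∈ S, b'' θ ≤ V) {θ θ' : ℝ}
    (hθ : θ ∈ S) (hθ' : θ' ∈ S) (h : θ ≤ θ') : bregman b b' θ θ' ≤ V / 2 * (θ' - θ) ^ 2 := by
  have hsub : Icc θ θ' ⊆ S := hS.ordConnected.out hθ hθ'
  have hg : ∀ x ∈ Icc θ θ', HasDerivAt (fun u => b u - b' θ * u - V / 2 * (u - θ) ^ 2)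
      (b' x - b' θ - V * (x - θ)) x := fun x hx => by
    refine (((hb x (hsub hx)).fun_sub ((hasDerivAt_id' x).const_mul (b' θ))).fun_sub
      (((hasDerivAt_id' x).sub_const θ).fun_pow 2 |>.const_mul (V / 2))).congr_deriv ?_
    norm_num; ring
  have hg' : ∀ x ∈ Icc θ θ', b' x - b' θ - V * (x - θ) ≤ 0 := fun x hx => by
    linarith [hS.image_sub_le_mul_sub_of_hasDerivAt_le hb' hV hθ (hsub hx) hx.1]
  have := (convex_Icc θ θ').image_sub_le_mul_sub_of_hasDerivAt_le hg hg' (left_mem_Icc.2 h)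
    (right_mem_Icc.2 h) h
  unfold bregman
  norm_num at this
  linarith

end Bregman

theorem ContinuousOn.apply_le_of_mem_closure {α β : Type*} [TopologicalSpace α] [LinearOrder α]
    [OrderClosedTopology α] [TopologicalSpace β] [Preorder β] [OrderClosedTopology β]
    {I : Set α} {g : α → β} (hg : ContinuousOn g (closure I)) {m x : α} (hm : m ∈ I)
    (h : ∀ z ∈ I, z ≤ m → g m ≤ g z) (hx : x ∈ closure I) (hxm : x ≤ m) : g m ≤ g x := by
  rcases hxm.eq_or_lt with rfl | hlt
  · exact le_rfl
  exact ContinuousWithinAt.closure_le (isOpen_Iio.inter_closure ⟨hlt, hx⟩)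
    continuousWithinAt_const ((hg x hx).mono (inter_subset_right.trans subset_closure))
    fun z hz => h z hz.2 hz.1.le

section MeanParametrization

variable {S : Set ℝ} {b b' : ℝ → ℝ} {kl : ℝ → ℝ → ℝ}

theorem kl_pos (hS : Convex ℝ S) (hb : ∀ θ ∈ S, HasDerivAt b (b' θ) θ)
    (hmono : StrictMonoOn b' S) (hkl : ∀ θ ∈ S, ∀ θ' ∈ S, kl (b' θ) (b' θ') = bregman b b' θ θ')
    {m y : ℝ} (hm : m ∈ b' '' S) (hy : y ∈ b' '' S) (hmy : m < y) : 0 < kl m y := by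
  obtain ⟨θ, hθ, rfl⟩ := hm
  obtain ⟨θ', hθ', rfl⟩ := hy
  rw [hkl θ hθ θ' hθ']
  exact bregman_pos hS hb hmono hθ hθ' ((hmono.lt_iff_lt hθ hθ').1 hmy)

theorem kl_le_kl_of_le (hS : Convex ℝ S) (hb : ∀ θ ∈ S, HasDerivAt b (b' θ) θ)
    (hmono : StrictMonoOn b' S) (hkl : ∀ θ ∈ S, ∀ θ' ∈ S, kl (b' θ) (b' θ') = bregman b b' θ θ')
    {x m y : ℝ} (hx : x ∈ b' '' S) (hm : m ∈ b' '' S) (hy : y ∈ b' '' S) (hxm : x ≤ m)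
    (hmy : m ≤ y) : kl m y ≤ kl x y := by
  obtain ⟨η, hη, rfl⟩ := hx
  obtain ⟨θ, hθ, rfl⟩ := hm
  obtain ⟨θ', hθ', rfl⟩ := hy
  rw [hkl θ hθ θ' hθ', hkl η hη θ' hθ']
  exact bregman_le_bregman_of_le hS hb hmono hη hθ ((hmono.le_iff_le hη hθ).1 hxm)
    ((hmono.le_iff_le hθ hθ').1 hmy)

theorem lt_of_kl_lt (hS : Convex ℝ S) (hb : ∀ θ ∈ S, HasDerivAt b (b' θ) θ)
    (hmono : StrictMonoOn b' S) (hkl : ∀ θ ∈ S, ∀ θ' ∈ S, kl (b' θ) (b' θ') = bregman b b' θ θ')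
    {x m y : ℝ} (hcont : ContinuousOn (fun x => kl x y) (closure (b' '' S)))
    (hx : x ∈ closure (b' '' S)) (hm : m ∈ b' '' S) (hy : y ∈ b' '' S) (hmy : m ≤ y)
    (h : kl x y < kl m y) : m < x := by
  by_contra! hxm
  exact h.not_ge <| hcont.apply_le_of_mem_closure hm
    (fun z hz hzm => kl_le_kl_of_le hS hb hmono hkl hz hm hy hzm hmy) hx hxm

end MeanParametrization

section Tilting

variable {Ω : Type*} [MeasurableSpace Ω] {P : Measure Ω}

theorem toNNReal_exp_sub_smul_exp_mul (θ c t x : ℝ) :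
    (exp (θ * x - c)).toNNReal • exp (t * x) = exp (-c) * exp ((θ + t) * x) := by
  rw [NNReal.smul_def, smul_eq_mul, coe_toNNReal _ (exp_pos _).le, ← exp_add, ← exp_add]
  ring_nf

theorem integral_exp_mul_withDensity_exp (ρ : Measure ℝ) (θ c t : ℝ) :
    ∫ x, exp (t * x) ∂ρ.withDensity (fun x => ENNReal.ofReal (exp (θ * x - c))) =
      exp (-c) * ∫ x, exp ((θ + t) * x) ∂ρ := by
  rw [← integral_const_mul, ← funext (toNNReal_exp_sub_smul_exp_mul θ c t)]
  exact integral_withDensity_eq_integral_smul (by fun_prop) _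

theorem integrable_exp_mul_withDensity_exp {ρ : Measure ℝ} {θ c t : ℝ}
    (h : Integrable (fun x => exp ((θ + t) * x)) ρ) :
    Integrable (fun x => exp (t * x))
      (ρ.withDensity fun x => ENNReal.ofReal (exp (θ * x - c))) := by
  refine (integrable_withDensity_iff_integrable_smul (by fun_prop)).2 ?_
  simpa only [toNNReal_exp_sub_smul_exp_mul] using h.const_mul (exp (-c))

theorem integrable_and_mgf_eq_of_map_eq_withDensity_exp [NeZero P] {X : Ω → ℝ}
    (hX : Measurable X) {ρ : Measure ℝ} {θ c t : ℝ}
    (hlaw : P.map X = ρ.withDensity fun x => ENNReal.ofReal (exp (θ * x - c)))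
    (hint : Integrable (fun x => exp ((θ + t) * x)) ρ) :
    Integrable (fun ω => exp (t * X ω)) P ∧
      mgf X P t = exp (log (∫ x, exp ((θ + t) * x) ∂ρ) - c) := by
  have : NeZero ρ := ⟨fun hρ => by
    have := (Measure.map_ne_zero_iff hX.aemeasurable).2 (NeZero.ne P)
    rw [hlaw, hρ, withDensity_zero_left] at this
    exact this rfl⟩
  refine ⟨?_, ?_⟩
  · have := integrable_exp_mul_withDensity_exp (c := c) hint
    rw [← hlaw] at this
    exact (integrable_map_measure (by fun_prop) hX.aemeasurable).1 this
  · rw [← mgf_id_map hX.aemeasurable, hlaw, exp_sub, exp_log (integral_exp_pos hint),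
      div_eq_mul_inv, mul_comm, ← exp_neg]
    exact integral_exp_mul_withDensity_exp ρ θ c t

end Tilting

section Chernoff

variable {Ω : Type*} [MeasurableSpace Ω] {P : Measure Ω} [IsFiniteMeasure P] {X : ℕ → Ω → ℝ}

theorem measureReal_sum_range_ge_le_exp_mul_pow (hindep : iIndepFun X P)
    (hmeas : ∀ i, Measurable (X i)) {t M : ℝ} (ht : 0 ≤ t)
    (hint : ∀ i, Integrable (fun ω => exp (t * X i ω)) P) (hmgf : ∀ i, mgf (X i) P t = M)
    (s : ℕ) (z : ℝ) :
    P.real {ω | z ≤ ∑ i ∈ Finset.range s, X i ω} ≤ exp (-t * z) * M ^ s := by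
  have := measure_ge_le_exp_mul_mgf (X := ∑ i ∈ Finset.range s, X i) (μ := P) z ht
    (hindep.integrable_exp_mul_sum hmeas fun i _ => hint i)
  rw [hindep.mgf_sum hmeas, Finset.prod_congr rfl fun i _ => hmgf i, Finset.prod_const,
    Finset.card_range] at this
  simpa only [Finset.sum_apply] using this

variable {S : Set ℝ} {b b' b'' : ℝ → ℝ} {V θ : ℝ}

theorem measureReal_sum_range_ge_le_exp_sq (hS : Convex ℝ S)
    (hb : ∀ θ ∈ S, HasDerivAt b (b' θ) θ) (hb' : ∀ θ ∈ S, HasDerivAt b' (b'' θ) θ)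
    (hmono : StrictMonoOn b' S) (hV : 0 < V) (hbV : ∀ θ ∈ S, b'' θ ≤ V) (hθ : θ ∈ S)
    (hindep : iIndepFun X P) (hmeas : ∀ i, Measurable (X i))
    (hmgf : ∀ t, θ + t ∈ S → ∀ i,
      Integrable (fun ω => exp (t * X i ω)) P ∧ mgf (X i) P t = exp (b (θ + t) - b θ))
    {m : ℝ} (hm : m ∈ b' '' S) (hθm : b' θ ≤ m) (s : ℕ) :
    P.real {ω | s * m ≤ ∑ i ∈ Finset.range s, X i ω} ≤
      exp (-((m - b' θ) ^ 2 / (2 * V))) ^ s := by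
  obtain ⟨θ', hθ', rfl⟩ := hm
  have hθθ' : θ ≤ θ' := (hmono.le_iff_le hθ hθ').1 hθm
  set δ := b' θ' - b' θ
  -- the Chernoff parameter `δ / V` optimizes the quadratic bound on the log-mgf
  set t := δ / V
  have ht : 0 ≤ t := div_nonneg (sub_nonneg.2 hθm) hV.le
  have htδ : t * V = δ := div_mul_cancel₀ δ hV.ne'
  have htθ : θ + t ∈ S := by
    refine hS.ordConnected.out hθ hθ' ⟨by linarith, ?_⟩
    have := hS.image_sub_le_mul_sub_of_hasDerivAt_le hb' hbV hθ hθ' hθθ'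
    nlinarith
  have hbreg := bregman_le_mul_sq hS hb hb' hbV hθ htθ (by linarith)
  unfold bregman at hbreg
  calc P.real {ω | s * b' θ' ≤ ∑ i ∈ Finset.range s, X i ω}
      ≤ exp (-t * (s * b' θ')) * exp (b (θ + t) - b θ) ^ s :=
        measureReal_sum_range_ge_le_exp_mul_pow hindep hmeas ht (fun i => (hmgf t htθ i).1)
          (fun i => (hmgf t htθ i).2) s _
    _ = exp (s * (b (θ + t) - b θ - t * b' θ')) := by
        rw [← exp_nat_mul, ← exp_add]; ring_nf
    _ ≤ exp (s * -(δ ^ 2 / (2 * V))) := by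
        gcongr
        field_simp
        nlinarith
    _ = exp (-(δ ^ 2 / (2 * V))) ^ s := by rw [← exp_nat_mul]

end Chernoff

theorem sum_Icc_le_add_div_one_sub {p : ℕ → ℝ} {N r : ℝ} (hN : 0 ≤ N) (hr : 0 ≤ r) (hr1 : r < 1)
    (hp1 : ∀ s : ℕ, (s : ℝ) ≤ N → p s ≤ 1) (hpr : ∀ s : ℕ, N < s → p s ≤ r ^ s) (t : ℕ) :
    ∑ s ∈ Finset.Icc 1 t, p s ≤ N + r / (1 - r) := by
  classical
  rw [← Finset.sum_filter_add_sum_filter_not _ (fun s : ℕ => (s : ℝ) ≤ N)]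
  gcongr
  · calc ∑ s ∈ (Finset.Icc 1 t).filter (fun s : ℕ => (s : ℝ) ≤ N), p s
        ≤ ∑ s ∈ (Finset.Icc 1 t).filter (fun s : ℕ => (s : ℝ) ≤ N), (1 : ℝ) :=
          Finset.sum_le_sum fun s hs => hp1 s (Finset.mem_filter.1 hs).2
      _ ≤ (Finset.Icc 1 ⌊N⌋₊).card := by
          rw [Finset.sum_const, nsmul_one]
          refine Nat.cast_le.2 (Finset.card_le_card fun s hs => ?_)
          simp only [Finset.mem_filter, Finset.mem_Icc] at hs ⊢
          exact ⟨hs.1.1, Nat.le_floor hs.2⟩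
      _ ≤ N := by simpa using Nat.floor_le hN
  · calc ∑ s ∈ (Finset.Icc 1 t).filter (fun s : ℕ => ¬(s : ℝ) ≤ N), p s
        ≤ ∑ s ∈ (Finset.Icc 1 t).filter (fun s : ℕ => ¬(s : ℝ) ≤ N), r ^ s :=
          Finset.sum_le_sum fun s hs => hpr s (not_le.1 (Finset.mem_filter.1 hs).2)
      _ ≤ ∑ s ∈ Finset.Ico 1 (t + 1), r ^ s := by
          rw [Finset.Ico_add_one_right_eq_Icc]
          exact Finset.sum_le_sum_of_subset_of_nonneg (Finset.filter_subset _ _)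
            fun _ _ _ => pow_nonneg hr _
      _ ≤ r / (1 - r) := by simpa using geom_sum_Ico_le_of_lt_one (m := 1) (n := t + 1) hr hr1

theorem exp_neg_div_one_sub_exp_neg_le {a : ℝ} (ha : 0 < a) :
    exp (-a) / (1 - exp (-a)) ≤ a⁻¹ := by
  have h1 : exp (-a) < 1 := exp_lt_one_iff.2 (neg_lt_zero.2 ha)
  rw [div_le_iff₀ (sub_pos.2 h1), exp_neg]
  have := add_one_le_exp a
  have hpos := exp_pos a
  field_simp
  nlinarith

theorem integral_sum_ite_eq_sum_measureReal {Ω ι α : Type*} [MeasurableSpace Ω] {P : Measure Ω}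
    [IsFiniteMeasure P] [TopologicalSpace α] [MeasurableSpace α] [OpensMeasurableSpace α]
    {Y : ι → Ω → α} (hY : ∀ i, Measurable (Y i)) {C : Set α} (hC : IsClosed C) {g : α → ℝ}
    (hg : ContinuousOn g C) (c : ι → ℝ) (T : Finset ι) (hYC : ∀ᵐ ω ∂P, ∀ i ∈ T, Y i ω ∈ C) :
    ∫ ω, ∑ i ∈ T, (if g (Y i ω) ≤ c i then (1 : ℝ) else 0) ∂P =
      ∑ i ∈ T, P.real (Y i ⁻¹' (C ∩ g ⁻¹' Iic (c i))) := by
  have hE : ∀ i, MeasurableSet (Y i ⁻¹' (C ∩ g ⁻¹' Iic (c i))) := fun i =>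
    hY i (hg.preimage_isClosed_of_isClosed hC isClosed_Iic).measurableSet
  rw [integral_congr_ae (g := fun ω => ∑ i ∈ T, (Y i ⁻¹' (C ∩ g ⁻¹' Iic (c i))).indicator 1 ω),
    integral_finsetSum _ fun i _ => (integrable_const 1).indicator (hE i)]
  · exact Finset.sum_congr rfl fun i _ => integral_indicator_one (hE i)
  filter_upwards [hYC] with ω hω
  refine Finset.sum_congr rfl fun i hi => ?_
  simp [Set.indicator, hω i hi]

section EmpiricalMean

variable {Ω : Type*} [MeasurableSpace Ω] {P : Measure Ω} {X : ℕ → Ω → ℝ}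

noncomputable def empiricalMean (X : ℕ → Ω → ℝ) (s : ℕ) (ω : Ω) : ℝ :=
  (∑ i ∈ Finset.range s, X i ω) / s

theorem measurable_empiricalMean (hX : ∀ i, Measurable (X i)) (s : ℕ) :
    Measurable (empiricalMean X s) :=
  (Finset.measurable_sum _ fun i _ => hX i).div_const _

theorem ae_empiricalMean_mem {C : Set ℝ} (hC : Convex ℝ C) (hCm : MeasurableSet C)
    (hX : ∀ i, Measurable (X i)) {ν : Measure ℝ} (hlaw : ∀ i, P.map (X i) = ν) (hν : ν Cᶜ = 0) :
    ∀ᵐ ω ∂P, ∀ s, 0 < s → empiricalMean X s ω ∈ C := by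
  have hXC : ∀ i, ∀ᵐ ω ∂P, X i ω ∈ C := fun i => ae_iff.2 <| by
    rw [← hν, ← hlaw i, Measure.map_apply (hX i) hCm.compl]
    rfl
  filter_upwards [ae_all_iff.2 hXC] with ω hω s hs
  rw [empiricalMean, Finset.sum_div]
  simp_rw [div_eq_inv_mul]
  refine hC.sum_mem (fun _ _ => by positivity) ?_ fun i _ => hω i
  rw [Finset.sum_const, Finset.card_range, nsmul_eq_mul, mul_inv_cancel₀ (by positivity)]

variable [IsProbabilityMeasure P] {S : Set ℝ} {b b' b'' : ℝ → ℝ} {kl : ℝ → ℝ → ℝ} {V θ : ℝ}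

theorem sum_measureReal_kl_empiricalMean_le (hS : Convex ℝ S)
    (hb : ∀ θ ∈ S, HasDerivAt b (b' θ) θ) (hb' : ∀ θ ∈ S, HasDerivAt b' (b'' θ) θ)
    (hmono : StrictMonoOn b' S) (hV : 0 < V) (hbV : ∀ θ ∈ S, b'' θ ≤ V) (hθ : θ ∈ S)
    (hkl : ∀ θ ∈ S, ∀ θ' ∈ S, kl (b' θ) (b' θ') = bregman b b' θ θ')
    (hindep : iIndepFun X P) (hmeas : ∀ i, Measurable (X i))
    (hmgf : ∀ t, θ + t ∈ S → ∀ i,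
      Integrable (fun ω => exp (t * X i ω)) P ∧ mgf (X i) P t = exp (b (θ + t) - b θ))
    {ε' y : ℝ} (hε' : 0 < ε') (hm : b' θ + ε' ∈ b' '' S) (hy : y ∈ b' '' S)
    (hmy : b' θ + ε' < y) (hcont : ContinuousOn (fun x => kl x y) (closure (b' '' S)))
    {f : ℝ} (hf : 0 ≤ f) (t₀ : ℕ) :
    ∑ s ∈ Finset.Icc 1 t₀, P.real (empiricalMean X s ⁻¹'
        (closure (b' '' S) ∩ (fun x => kl x y) ⁻¹' Iic (f / s))) ≤
      f / kl (b' θ + ε') y + 2 * V / ε' ^ 2 := by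
  have hkl0 := kl_pos hS hb hmono hkl hm hy hmy
  have ha : 0 < ε' ^ 2 / (2 * V) := by positivity
  have htail : ∀ s : ℕ, f / kl (b' θ + ε') y < s →
      P.real (empiricalMean X s ⁻¹' (closure (b' '' S) ∩ (fun x => kl x y) ⁻¹' Iic (f / s))) ≤
        exp (-(ε' ^ 2 / (2 * V))) ^ s := by
    intro s hs
    have hs0 : (0 : ℝ) < s := (div_nonneg hf hkl0.le).trans_lt hs
    calc _ ≤ P.real {ω | s * (b' θ + ε') ≤ ∑ i ∈ Finset.range s, X i ω} := by
          refine measureReal_mono fun ω ⟨hωC, hωkl⟩ => ?_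
          have hklt : f / s < kl (b' θ + ε') y := by
            rw [div_lt_iff₀ hkl0] at hs
            rw [div_lt_iff₀ hs0]
            linarith
          have := lt_of_kl_lt hS hb hmono hkl hcont hωC hm hy hmy.le (hωkl.trans_lt hklt)
          rw [empiricalMean, lt_div_iff₀ hs0] at this
          exact (mul_comm (s : ℝ) _ ▸ this).le
      _ ≤ _ := by
          simpa using measureReal_sum_range_ge_le_exp_sq hS hb hb' hmono hV hbV hθ hindep hmeas
            hmgf hm (by linarith) s
  calc _ ≤ _ + exp (-(ε' ^ 2 / (2 * V))) / (1 - exp (-(ε' ^ 2 / (2 * V)))) :=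
        sum_Icc_le_add_div_one_sub (div_nonneg hf hkl0.le) (exp_pos _).le
          (exp_lt_one_iff.2 (neg_lt_zero.2 ha)) (fun s _ => measureReal_le_one) htail t₀
    _ ≤ _ := add_le_add_right ((exp_neg_div_one_sub_exp_neg_le ha).trans_eq (inv_div _ _)) _

end EmpiricalMean

theorem expected_kappa_le_general
    (ρ : Measure ℝ)
    (Θ : Set ℝ) (hΘ : Θ = {θ : ℝ | Integrable (fun x => exp (θ * x)) ρ})
    (b b' b'' : ℝ → ℝ)
    (hb : ∀ θ ∈ Θ, b θ = log (∫ x, exp (θ * x) ∂ρ))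
    (hb' : ∀ θ ∈ interior Θ, HasDerivAt b (b' θ) θ)
    (hb'' : ∀ θ ∈ interior Θ, HasDerivAt b' (b'' θ) θ)
    (hbpos : ∀ θ ∈ interior Θ, 0 < b'' θ)
    (Iset : Set ℝ) (hI : Iset = b' '' (interior Θ))
    (kl : ℝ → ℝ → ℝ)
    (hkl : ∀ θ ∈ interior Θ, ∀ θ' ∈ interior Θ,
      kl (b' θ) (b' θ') = b θ' - b θ - b' θ * (θ' - θ))
    (hklcont : ∀ μ' ∈ Iset, ContinuousOn (fun x => kl x μ') (closure Iset))
    (V : ℝ) (hV : 0 < V) (hbV : ∀ θ ∈ interior Θ, b'' θ ≤ V)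
    (θ : ℝ) (hθ : θ ∈ interior Θ)
    (ν : Measure ℝ) (hν : ν = ρ.withDensity (fun x => ENNReal.ofReal (exp (θ * x - b θ))))
    (hsupp : ν (closure Iset)ᶜ = 0)
    (μ : ℝ) (hμ : μ = b' θ)
    (Ω : Type*) [MeasurableSpace Ω] (P : Measure Ω) [IsProbabilityMeasure P]
    (X : ℕ → Ω → ℝ) (hXmeas : ∀ i, Measurable (X i))
    (hXlaw : ∀ i, Measure.map (X i) P = ν)
    (hXindep : ProbabilityTheory.iIndepFun X P)
    (μhat : ℕ → Ω → ℝ) (hμhat : ∀ s ω, μhat s ω = (∑ i ∈ Finset.range s, X i ω) / s)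
    (μ₁ : ℝ)
    (Δ : ℝ) (hΔ : Δ = μ₁ - μ)
    (ε : ℝ) (hεΔ : ε < Δ) (hμ₁ε : μ₁ - ε ∈ Iset)
    (t₀ : ℕ)
    (κ : Ω → ℝ)
    (hκ : ∀ ω, κ ω = ∑ s ∈ Finset.Icc 1 t₀,
      (if kl (μhat s ω) (μ₁ - ε) ≤ 3 * Real.log t₀ / s then (1 : ℝ) else 0)) :
    ∫ ω, κ ω ∂P ≤ sInf {v : ℝ | ∃ ε' : ℝ, 0 < ε' ∧ ε' < Δ - ε ∧ μ + ε' ∈ Iset ∧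
      v = 3 * Real.log t₀ / kl (μ + ε') (μ₁ - ε) + 2 * V / ε' ^ 2} := by
  subst hI hμ hΔ
  obtain rfl : μhat = empiricalMean X := funext fun s => funext (hμhat s)
  have hS : Convex ℝ (interior Θ) := (hΘ ▸ convex_setOf_integrable_exp_mul ρ).interior
  have hmono := strictMonoOn_of_hasDerivAt_pos hS hb'' hbpos
  have hIconv : Convex ℝ (b' '' interior Θ) := (hS.isPreconnected.image b'
    fun x hx => (hb'' x hx).continuousAt.continuousWithinAt).convex
  have hmgf : ∀ t, θ + t ∈ interior Θ → ∀ i,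
      Integrable (fun ω => exp (t * X i ω)) P ∧ mgf (X i) P t = exp (b (θ + t) - b θ) := by
    intro t ht i
    have ht' : θ + t ∈ Θ := interior_subset ht
    rw [hb _ ht']
    rw [hΘ] at ht'
    exact integrable_and_mgf_eq_of_map_eq_withDensity_exp (hXmeas i) (hν ▸ hXlaw i) ht'
  have hmean : ∀ᵐ ω ∂P, ∀ s ∈ Finset.Icc 1 t₀,
      empiricalMean X s ω ∈ closure (b' '' interior Θ) := by
    filter_upwards [ae_empiricalMean_mem hIconv.closure isClosed_closure.measurableSet hXmeas hXlaw
      hsupp] with ω hω s hs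
    exact hω s (Finset.mem_Icc.1 hs).1
  rw [integral_congr_ae (ae_of_all _ hκ), integral_sum_ite_eq_sum_measureReal
    (measurable_empiricalMean hXmeas) isClosed_closure (hklcont _ hμ₁ε)
    (fun s : ℕ => 3 * log t₀ / s) _ hmean]
  refine le_csInf ⟨_, (μ₁ - b' θ - ε) / 2, by linarith, by linarith,
    hIconv.ordConnected.out (mem_image_of_mem b' hθ) hμ₁ε ⟨by linarith, by linarith⟩, rfl⟩ ?_
  rintro _ ⟨ε', hε'0, hε'Δ, hμε', rfl⟩
  have hf : 0 ≤ 3 * log t₀ := mul_nonneg zero_le_three (log_natCast_nonneg t₀)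
  exact sum_measureReal_kl_empiricalMean_le hS hb' hb'' hmono hV hbV hθ hkl hXindep hXmeas hmgf
    hε'0 hμε' hμ₁ε (by linarith) (hklcont _ hμ₁ε) hf t₀

/-- Let `μ₁ ∈ I` with `μ₁ > μ`, `Δ = μ₁ - μ`, `ε ∈ (0, Δ)` with
`μ₁ - ε ∈ I`, `t₀ ≥ 1`, `f t₀ = 3 log t₀`, and `κ = Σ_{s=1}^{t₀} 1{kl (μ̂ₛ, μ₁ - ε) ≤ f t₀ / s}`.
Then `E[κ] ≤ inf_{ε' ∈ (0, Δ - ε), μ + ε' ∈ I} (f t₀ / kl (μ + ε', μ₁ - ε) + 2V / ε'²)`. -/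
theorem expected_kappa_le
    (ρ : Measure ℝ) [SigmaFinite ρ]
    (Θ : Set ℝ) (hΘ : Θ = {θ : ℝ | Integrable (fun x => exp (θ * x)) ρ})
    (b b' b'' : ℝ → ℝ)
    (hb : ∀ θ ∈ Θ, b θ = log (∫ x, exp (θ * x) ∂ρ))
    (hb' : ∀ θ ∈ interior Θ, HasDerivAt b (b' θ) θ)
    (hb'' : ∀ θ ∈ interior Θ, HasDerivAt b' (b'' θ) θ)
    (hbpos : ∀ θ ∈ interior Θ, 0 < b'' θ)
    (Iset : Set ℝ) (hI : Iset = b' '' (interior Θ))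
    (kl : ℝ → ℝ → ℝ)
    (hkl : ∀ θ ∈ interior Θ, ∀ θ' ∈ interior Θ,
      kl (b' θ) (b' θ') = b θ' - b θ - b' θ * (θ' - θ))
    (hklcont : ∀ μ' ∈ Iset, ContinuousOn (fun x => kl x μ') (closure Iset))
    (V : ℝ) (hV : 0 < V) (hbV : ∀ θ ∈ interior Θ, b'' θ ≤ V)
    (θ : ℝ) (hθ : θ ∈ interior Θ)
    (ν : Measure ℝ) (hν : ν = ρ.withDensity (fun x => ENNReal.ofReal (exp (θ * x - b θ))))
    (hsupp : ν (closure Iset)ᶜ = 0)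
    (μ : ℝ) (hμ : μ = b' θ)
    (Ω : Type*) [MeasurableSpace Ω] (P : Measure Ω) [IsProbabilityMeasure P]
    (X : ℕ → Ω → ℝ) (hXmeas : ∀ i, Measurable (X i))
    (hXlaw : ∀ i, Measure.map (X i) P = ν)
    (hXindep : ProbabilityTheory.iIndepFun X P)
    (μhat : ℕ → Ω → ℝ) (hμhat : ∀ s ω, μhat s ω = (∑ i ∈ Finset.range s, X i ω) / s)
    (μ₁ : ℝ) (hμ₁ : μ₁ ∈ Iset) (hμμ₁ : μ < μ₁)
    (Δ : ℝ) (hΔ : Δ = μ₁ - μ)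
    (ε : ℝ) (hε : 0 < ε) (hεΔ : ε < Δ) (hμ₁ε : μ₁ - ε ∈ Iset)
    (t₀ : ℕ) (ht₀ : 1 ≤ t₀)
    (κ : Ω → ℝ)
    (hκ : ∀ ω, κ ω = ∑ s ∈ Finset.Icc 1 t₀,
      (if kl (μhat s ω) (μ₁ - ε) ≤ 3 * Real.log t₀ / s then (1 : ℝ) else 0)) :
    ∫ ω, κ ω ∂P ≤ sInf {v : ℝ | ∃ ε' : ℝ, 0 < ε' ∧ ε' < Δ - ε ∧ μ + ε' ∈ Iset ∧
      v = 3 * Real.log t₀ / kl (μ + ε') (μ₁ - ε) + 2 * V / ε' ^ 2} :=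
  expected_kappa_le_general ρ Θ hΘ b b' b'' hb hb' hb'' hbpos Iset hI kl hkl hklcont V hV hbV θ hθ ν
    hν hsupp μ hμ Ω P X hXmeas hXlaw hXindep μhat hμhat μ₁ Δ hΔ ε hεΔ hμ₁ε t₀ κ hκ
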